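/- If G is a 2-edge-connected finite simple graph with path-width at most 2, then every block of G contains at most two cut vertices of G. -/

import Mathlib

open SimpleGraph

universe u v

/-- A path-decomposition of a simple graph: a finite sequence of bags covering all vertices
and edges, such that bags containing a fixed vertex occur consecutively. -/
structure PathDecomp {V : Type u} (G : SimpleGraph V) where
  n : ℕ
  bag : Fin n → Finset V
  mem_bag : ∀ v : V, ∃ i, v ∈ bag i
  edge_bag : ∀ ⦃u w : V⦄, G.Adj u w → ∃ i, u ∈ bag i ∧ w ∈ bag i
  interp : ∀ i j k : Fin n, i ≤ j → j ≤ k → ∀ v : V, v ∈ bag i → v ∈ bag k → v ∈ bag j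

/-- The width of a path-decomposition: (maximal bag size) - 1. -/
def PathDecomp.width {V : Type u} {G : SimpleGraph V} (D : PathDecomp G) : ℕ :=
  (Finset.univ.sup fun i => (D.bag i).card) - 1

/-- The path-width of a graph: the minimum width of a path-decomposition. -/
noncomputable def pathWidth {V : Type u} (G : SimpleGraph V) : ℕ :=
  sInf {w | ∃ D : PathDecomp G, D.width = w}

/-- `IsMinor G H` : `H` is a minor of `G`, witnessed by a family of pairwise disjoint nonempty
connected branch sets in `G` indexed by the vertices of `H`. -/
def IsMinor {V : Type u} {W : Type v} (G : SimpleGraph V) (H : SimpleGraph W) : Prop :=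
  ∃ B : W → Set V,
    (∀ w, (B w).Nonempty) ∧
    (Pairwise fun w w' => Disjoint (B w) (B w')) ∧
    (∀ w, (G.induce (B w)).Connected) ∧
    (∀ ⦃w w'⦄, H.Adj w w' → ∃ u ∈ B w, ∃ u' ∈ B w', G.Adj u u')

/-- A graph is 2-connected if it has at least 3 vertices and deleting any vertex leaves it
connected. -/
def TwoConnected {V : Type u} (G : SimpleGraph V) : Prop :=
  3 ≤ Nat.card V ∧ ∀ v : V, (G.induce ({v}ᶜ : Set V)).Connected

/-- A graph is 2-edge-connected if it is connected, has at least 2 vertices, and deleting any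
edge leaves it connected. -/
def TwoEdgeConnected {V : Type u} (G : SimpleGraph V) : Prop :=
  G.Connected ∧ 2 ≤ Nat.card V ∧ ∀ e ∈ G.edgeSet, (G.deleteEdges {e}).Connected

/-- A track representation of a graph `G`: two disjoint paths `p 0, …, p (k-1)` and
`q 0, …, q (l-1)`, short chords (edges `p i — q j`) and long chords (paths `p i — m — q j`
with middle vertex `m ∈ M`, recorded by `ends m = (i, j)`), the chords pairwise non-crossing,
with a chord joining the first vertices of the two paths and a chord joining the last ones;
the vertices of `G` are exactly those of the two paths plus the middle vertices, and the
edges of `G` are exactly the path edges and the chord edges. -/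
structure TrackRep {V : Type u} (G : SimpleGraph V) where
  k : ℕ
  l : ℕ
  kpos : 0 < k
  lpos : 0 < l
  p : Fin k → V
  q : Fin l → V
  short : Set (Fin k × Fin l)
  M : Set V
  ends : V → Fin k × Fin l
  M_fin : M.Finite
  p_inj : Function.Injective p
  q_inj : Function.Injective q
  p_ne_q : ∀ i j, p i ≠ q j
  M_ne_p : ∀ ⦃m⦄, m ∈ M → ∀ i, m ≠ p i
  M_ne_q : ∀ ⦃m⦄, m ∈ M → ∀ j, m ≠ q j
  vert_cover : ∀ x : V, (∃ i, x = p i) ∨ (∃ j, x = q j) ∨ x ∈ M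
  noncross : ∀ c ∈ short ∪ ends '' M, ∀ c' ∈ short ∪ ends '' M,
      0 ≤ (((c.1 : ℕ) : ℤ) - ((c'.1 : ℕ) : ℤ)) * (((c.2 : ℕ) : ℤ) - ((c'.2 : ℕ) : ℤ))
  first_chord : (⟨0, kpos⟩, ⟨0, lpos⟩) ∈ short ∪ ends '' M
  last_chord : (⟨k - 1, Nat.sub_lt kpos Nat.one_pos⟩, ⟨l - 1, Nat.sub_lt lpos Nat.one_pos⟩)
      ∈ short ∪ ends '' M
  adj_iff : ∀ u w : V, G.Adj u w ↔
      (∃ i j : Fin k, ((i : ℕ) + 1 = (j : ℕ) ∨ (j : ℕ) + 1 = (i : ℕ)) ∧ u = p i ∧ w = p j) ∨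
      (∃ i j : Fin l, ((i : ℕ) + 1 = (j : ℕ) ∨ (j : ℕ) + 1 = (i : ℕ)) ∧ u = q i ∧ w = q j) ∨
      (∃ c ∈ short, (u = p c.1 ∧ w = q c.2) ∨ (u = q c.2 ∧ w = p c.1)) ∨
      (∃ m ∈ M, (u = m ∧ (w = p (ends m).1 ∨ w = q (ends m).2)) ∨
                (w = m ∧ (u = p (ends m).1 ∨ u = q (ends m).2)))

/-- A graph is a track if it admits a track representation. -/
def IsTrack {V : Type u} (G : SimpleGraph V) : Prop := Nonempty (TrackRep G)

/-- A graph is a partial track if it is (isomorphic to) a subgraph of a track. -/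
def IsPartialTrack {V : Type u} (G : SimpleGraph V) : Prop :=
  ∃ (W : Type) (T : SimpleGraph W) (f : V → W),
    IsTrack T ∧ Function.Injective f ∧ ∀ ⦃a b : V⦄, G.Adj a b → T.Adj (f a) (f b)

/-- `r` can play the role of a corner of `G`: some track representation of `G` has `r`
as one of the four corners `p₁, p_k, q₁, q_ℓ`. -/
def CanBeCorner {V : Type u} (G : SimpleGraph V) (r : V) : Prop :=
  ∃ T : TrackRep G,
    r = T.p ⟨0, T.kpos⟩ ∨ r = T.p ⟨T.k - 1, Nat.sub_lt T.kpos Nat.one_pos⟩ ∨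
    r = T.q ⟨0, T.lpos⟩ ∨ r = T.q ⟨T.l - 1, Nat.sub_lt T.lpos Nat.one_pos⟩

/-- `r` and `r'` can play the role of opposite corners of `G`. -/
def CanBeOppositeCorners {V : Type u} (G : SimpleGraph V) (r r' : V) : Prop :=
  ∃ T : TrackRep G,
    (r = T.p ⟨0, T.kpos⟩ ∨ r = T.q ⟨0, T.lpos⟩) ∧
    (r' = T.p ⟨T.k - 1, Nat.sub_lt T.kpos Nat.one_pos⟩ ∨
     r' = T.q ⟨T.l - 1, Nat.sub_lt T.lpos Nat.one_pos⟩)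

/-- `r` can play the role of a degenerate side of `G`: some track representation has `k = 1`
and `p₁ = r`. -/
def CanBeDegenerateSide {V : Type u} (G : SimpleGraph V) (r : V) : Prop :=
  ∃ T : TrackRep G, T.k = 1 ∧ r = T.p ⟨0, T.kpos⟩

/-- Two edges are equal or lie on a common cycle. -/
def OnCommonCycle {V : Type u} (G : SimpleGraph V) (e f : Sym2 V) : Prop :=
  e = f ∨ ∃ (x : V) (c : G.Walk x x), c.IsCycle ∧ e ∈ c.edges ∧ f ∈ c.edges

/-- The subgraph of `G` spanned by a set `F` of edges. -/
def edgeSpan {V : Type u} (G : SimpleGraph V) (F : Set (Sym2 V)) : G.Subgraph where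
  verts := {a | ∃ b, G.Adj a b ∧ s(a, b) ∈ F}
  Adj a b := G.Adj a b ∧ s(a, b) ∈ F
  adj_sub h := h.1
  edge_vert h := ⟨_, h.1, h.2⟩
  symm := ⟨fun a b h => ⟨h.1.symm, by rw [Sym2.eq_swap]; exact h.2⟩⟩

/-- `B` is a block of `G`: the subgraph spanned by an equivalence class of edges under the
relation "being equal or lying on a common cycle". -/
def IsBlock {V : Type u} (G : SimpleGraph V) (B : G.Subgraph) : Prop :=
  ∃ e ∈ G.edgeSet, B = edgeSpan G {f | OnCommonCycle G e f}

/-- A cut vertex: a vertex whose removal disconnects the (connected) graph. -/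
def IsCutVertex {V : Type u} (G : SimpleGraph V) (v : V) : Prop :=
  G.Connected ∧ ¬ (G.induce ({v}ᶜ : Set V)).Connected

/-- The subgraph `B` of `G` (as an abstract graph) is a track. -/
def SubIsTrack {V : Type u} {G : SimpleGraph V} (B : G.Subgraph) : Prop :=
  IsTrack B.coe

/-- The vertex `r` can play the role of a corner of the subgraph `B`. -/
def SubCanBeCorner {V : Type u} {G : SimpleGraph V} (B : G.Subgraph) (r : V) : Prop :=
  ∃ h : r ∈ B.verts, CanBeCorner B.coe ⟨r, h⟩

/-- The vertices `r, r'` can play the role of opposite corners of the subgraph `B`. -/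
def SubCanBeOppositeCorners {V : Type u} {G : SimpleGraph V} (B : G.Subgraph)
    (r r' : V) : Prop :=
  ∃ (h : r ∈ B.verts) (h' : r' ∈ B.verts), CanBeOppositeCorners B.coe ⟨r, h⟩ ⟨r', h'⟩

/-- The vertex `r` can play the role of a degenerate side of the subgraph `B`. -/
def SubCanBeDegenerateSide {V : Type u} {G : SimpleGraph V} (B : G.Subgraph) (r : V) : Prop :=
  ∃ h : r ∈ B.verts, CanBeDegenerateSide B.coe ⟨r, h⟩

/-- `C` is a longest cycle of `G`. -/
def IsLongestCycle {V : Type u} (G : SimpleGraph V) {x : V} (C : G.Walk x x) : Prop :=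
  C.IsCycle ∧ ∀ (y : V) (D : G.Walk y y), D.IsCycle → D.length ≤ C.length

/-- `N` is (the vertex set of) a connected component of `G − S`. -/
def IsCompOf {V : Type u} (G : SimpleGraph V) (S N : Set V) : Prop :=
  N.Nonempty ∧ N ⊆ Sᶜ ∧ (G.induce N).Connected ∧
    ∀ a ∈ N, ∀ b, b ∉ S → G.Adj a b → b ∈ N

/-- The subgraph consisting of all edges of `G` incident to a vertex of `N`
(together with their endpoints). -/
def bridgeFromComp {V : Type u} (G : SimpleGraph V) (N : Set V) : G.Subgraph where
  verts := {a | ∃ b, G.Adj a b ∧ (a ∈ N ∨ b ∈ N)}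
  Adj a b := G.Adj a b ∧ (a ∈ N ∨ b ∈ N)
  adj_sub h := h.1
  edge_vert h := ⟨_, h.1, h.2⟩
  symm := ⟨fun a b h => ⟨h.1.symm, h.2.symm⟩⟩

/-- `B` is a bridge of the cycle `C` in `G`: either the subgraph of all edges incident to a
component of `G − V(C)`, or a single edge of `G` joining two vertices of `C` and not lying
on `C`. -/
def IsBridgeOf {V : Type u} (G : SimpleGraph V) {x : V} (C : G.Walk x x)
    (B : G.Subgraph) : Prop :=
  (∃ N : Set V, IsCompOf G {a | a ∈ C.support} N ∧ B = bridgeFromComp G N) ∨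
  (∃ (a b : V) (h : G.Adj a b), a ∈ C.support ∧ b ∈ C.support ∧ s(a, b) ∉ C.edges ∧
      B = G.subgraphOfAdj h)

/-- The legs of a bridge `B` of a cycle `C`: the vertices of `B` lying on `C`. -/
def legs {V : Type u} {G : SimpleGraph V} {x : V} (C : G.Walk x x) (B : G.Subgraph) : Set V :=
  {a | a ∈ B.verts ∧ a ∈ C.support}

/-- `z` lies strictly between `a` and `b` in the linear order given by the list `L`. -/
def posBetween {V : Type u} [DecidableEq V] (L : List V) (a b z : V) : Prop :=
  (L.idxOf a < L.idxOf z ∧ L.idxOf z < L.idxOf b) ∨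
  (L.idxOf b < L.idxOf z ∧ L.idxOf z < L.idxOf a)

/-- The pairs `{a₁, a₂}` and `{b₁, b₂}` are crossing pairs on the cyclic order given by the
list `L`: the pairs are disjoint pairs of distinct vertices and the four vertices alternate
cyclically (equivalently, exactly one of `b₁, b₂` lies strictly between `a₁` and `a₂`). -/
def CrossingPairs {V : Type u} [DecidableEq V] (L : List V) (a₁ a₂ b₁ b₂ : V) : Prop :=
  a₁ ≠ a₂ ∧ b₁ ≠ b₂ ∧ a₁ ≠ b₁ ∧ a₁ ≠ b₂ ∧ a₂ ≠ b₁ ∧ a₂ ≠ b₂ ∧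
    Xor' (posBetween L a₁ a₂ b₁) (posBetween L a₁ a₂ b₂)

/-- Two bridges of a cycle `C` cross: some pair of legs of one and some pair of legs of the
other are crossing pairs along `C`. -/
def BridgesCross {V : Type u} [DecidableEq V] {G : SimpleGraph V} {x : V} (C : G.Walk x x)
    (B₁ B₂ : G.Subgraph) : Prop :=
  ∃ a₁ ∈ legs C B₁, ∃ a₂ ∈ legs C B₁, ∃ b₁ ∈ legs C B₂, ∃ b₂ ∈ legs C B₂,
    CrossingPairs C.support.tail a₁ a₂ b₁ b₂

/-!
Let `v` be a cut vertex of `G` lying in the block `B`, and let `K v` (`G.cutOff v B.verts`)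
consist of `v` and the vertices that `G - v` separates from `B`. The rest of `B` stays connected
in `G - v`, so the complement of `K v` is connected, and the sets `K v` of distinct cut vertices
of `B` are disjoint. As `G` is 2-edge-connected, an edge from `v` into `K v` lies on a cycle, and
that cycle stays inside `K v`. In a path-decomposition with bags of size at most three every cycle
contains a whole bag: the first bag of the vertex of the cycle that appears last also holds its
two neighbours on the cycle. So each cut vertex `v` of `B` owns a bag inside `K v`. Of three such
bags, the middle one lies in `K v` for the middle vertex `v` while the outer two meet its
connected complement, which is impossible because every bag separates the bags before it from
those after it.
-/

namespace SimpleGraph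

variable {V : Type u} {G : SimpleGraph V}

def ReachableAvoiding (G : SimpleGraph V) (v x y : V) : Prop :=
  ∃ W : G.Walk x y, v ∉ W.support

namespace ReachableAvoiding

variable {v x y z : V}

lemma left_ne (h : G.ReachableAvoiding v x y) : x ≠ v := by
  obtain ⟨W, hW⟩ := h
  rintro rfl
  exact hW W.start_mem_support

lemma right_ne (h : G.ReachableAvoiding v x y) : y ≠ v := by
  obtain ⟨W, hW⟩ := h
  rintro rfl
  exact hW W.end_mem_support

lemma refl (hx : x ≠ v) : G.ReachableAvoiding v x x :=
  ⟨.nil, by simpa using hx.symm⟩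

lemma symm (h : G.ReachableAvoiding v x y) : G.ReachableAvoiding v y x :=
  let ⟨W, hW⟩ := h
  ⟨W.reverse, by simpa using hW⟩

lemma trans (h : G.ReachableAvoiding v x y) (h' : G.ReachableAvoiding v y z) :
    G.ReachableAvoiding v x z :=
  let ⟨W, hW⟩ := h
  let ⟨W', hW'⟩ := h'
  ⟨W.append W', by simp [Walk.mem_support_append_iff, hW, hW']⟩

lemma of_adj (h : G.Adj x y) (hx : x ≠ v) (hy : y ≠ v) : G.ReachableAvoiding v x y :=
  ⟨.cons h .nil, by simp [hx.symm, hy.symm]⟩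

lemma reachable_induce (h : G.ReachableAvoiding v x y) :
    (G.induce {v}ᶜ).Reachable ⟨x, h.left_ne⟩ ⟨y, h.right_ne⟩ :=
  let ⟨W, hW⟩ := h
  ⟨W.induce {v}ᶜ fun _ hz hzv => hW (hzv ▸ hz)⟩

end ReachableAvoiding

namespace Walk

variable {v x y z : V}

lemma reachableAvoiding_of_mem_support {W : G.Walk x y} (hW : v ∉ W.support)
    (hz : z ∈ W.support) : G.ReachableAvoiding v x z := by
  classical
  exact ⟨W.takeUntil z hz, fun h => hW (W.support_takeUntil_subset_support hz h)⟩

lemma exists_reachableAvoiding_adj (W : G.Walk x y) (hv : v ∈ W.support) (hx : x ≠ v) :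
    ∃ u, G.ReachableAvoiding v x u ∧ G.Adj u v := by
  induction W with
  | nil => exact absurd (by simpa using hv) hx.symm
  | @cons a b c hab W ih =>
    by_cases hb : b = v
    · exact ⟨a, .refl hx, hb ▸ hab⟩
    · obtain ⟨u, hbu, huv⟩ := ih (by simpa [hx.symm] using hv) hb
      exact ⟨u, (ReachableAvoiding.of_adj hab hx hb).trans hbu, huv⟩

lemma IsCycle.reachableAvoiding {r : V} {c : G.Walk r r} (hc : c.IsCycle)
    (hx : x ∈ c.support) (hy : y ∈ c.support) (hxv : x ≠ v) (hyv : y ≠ v) :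
    G.ReachableAvoiding v x y := by
  classical
  by_cases hv : v ∈ c.support
  · -- rotated to start at `v`, the cycle minus its first vertex is a path ending at `v`
    have hc' := hc.rotate hv
    have hmem : ∀ z ∈ c.support, z ∈ (c.rotate v hv).tail.support := by
      intro z hz
      rw [support_tail_of_not_nil _ hc'.not_nil, (c.support_rotate v hv).mem_iff]
      rcases c.mem_support_iff.mp hz with rfl | hz
      · exact c.end_mem_tail_support hc.not_nil
      · exact hz
    have hreach : ∀ z ∈ c.support, z ≠ v →
        G.ReachableAvoiding v (c.rotate v hv).snd z := fun z hz hzv =>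
      ⟨_, endpoint_notMem_support_takeUntil hc'.isPath_tail (hmem z hz) hzv.symm⟩
    exact (hreach x hx hxv).symm.trans (hreach y hy hyv)
  · refine ⟨(c.dropUntil x hx).append (c.takeUntil y hy), fun h => hv ?_⟩
    rcases mem_support_append_iff _ _ |>.mp h with h | h
    · exact c.support_dropUntil_subset_support hx h
    · exact c.support_takeUntil_subset_support hy h

lemma IsCycle.two_le_card_filter_adj [DecidableEq V] [DecidableRel G.Adj] {r : V}
    {c : G.Walk r r} (hc : c.IsCycle) (hx : x ∈ c.support) :
    2 ≤ (c.support.toFinset.filter (G.Adj x)).card := by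
  have hc' := hc.rotate hx
  refine Finset.one_lt_card.mpr ⟨(c.rotate x hx).snd, ?_, (c.rotate x hx).penultimate, ?_,
    hc'.snd_ne_penultimate⟩
  all_goals rw [Finset.mem_filter, List.mem_toFinset, ← c.mem_support_rotate_iff x hx]
  · exact ⟨getVert_mem_support _ _, adj_snd hc'.not_nil⟩
  · exact ⟨getVert_mem_support _ _, (adj_penultimate hc'.not_nil).symm⟩

end Walk

variable {v x y a : V} {A : Set V}

/-- Contains `v` itself, since no walk from `v` avoids `v`. -/
def cutOff (G : SimpleGraph V) (v : V) (A : Set V) : Set V :=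
  {x | ∀ a ∈ A, ¬ G.ReachableAvoiding v x a}

lemma self_mem_cutOff : v ∈ G.cutOff v A :=
  fun _ _ h => h.left_ne rfl

lemma notMem_cutOff (ha : a ∈ A) (hav : a ≠ v) : a ∉ G.cutOff v A :=
  fun h => h a ha (.refl hav)

lemma mem_cutOff_of_reachableAvoiding (hx : x ∈ G.cutOff v A)
    (h : G.ReachableAvoiding v x y) : y ∈ G.cutOff v A :=
  fun b hb hyb => hx b hb (h.trans hyb)

lemma disjoint_cutOff {v' : V} (hG : G.Connected) (hv : v ∈ A) (hv' : v' ∈ A) (hne : v ≠ v') :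
    Disjoint (G.cutOff v A) (G.cutOff v' A) := by
  refine Set.disjoint_left.mpr fun z hz hz' => ?_
  have hzv : z ≠ v := by
    rintro rfl
    exact notMem_cutOff hv hne hz'
  obtain ⟨u, hzu, huv⟩ :=
    (hG.preconnected z v).some.exists_reachableAvoiding_adj (Walk.end_mem_support _) hzv
  obtain ⟨W, hW⟩ := hzu
  -- the walk from `z` to `u` stays inside `G.cutOff v A`, which does not contain `v'`
  have hv'W : v' ∉ W.support := fun h =>
    notMem_cutOff hv' hne.symm
      (mem_cutOff_of_reachableAvoiding hz (Walk.reachableAvoiding_of_mem_support hW h))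
  have hzu' : G.ReachableAvoiding v' z u := ⟨W, hv'W⟩
  have hzv' : G.ReachableAvoiding v' z v :=
    hzu'.trans (.of_adj huv hzu'.right_ne hne)
  exact notMem_cutOff hv hne (mem_cutOff_of_reachableAvoiding hz' hzv')

lemma preconnected_induce_compl_cutOff (hA : ∀ b ∈ A, b ≠ v → G.ReachableAvoiding v a b) :
    (G.induce (G.cutOff v A)ᶜ).Preconnected := by
  have hreach : ∀ x ∉ G.cutOff v A, G.ReachableAvoiding v x a := by
    intro x hx
    simp only [cutOff, Set.mem_ofPred_eq, not_forall, not_not] at hx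
    obtain ⟨b, hb, hxb⟩ := hx
    exact hxb.trans (hA b hb hxb.right_ne).symm
  rintro ⟨x, hx⟩ ⟨y, hy⟩
  obtain ⟨W, hW⟩ := (hreach x hx).trans (hreach y hy).symm
  refine ⟨W.induce (G.cutOff v A)ᶜ fun z hz hzA => hx ?_⟩
  exact mem_cutOff_of_reachableAvoiding hzA (Walk.reachableAvoiding_of_mem_support hW hz).symm

end SimpleGraph

section CutVertex

variable {V : Type u} {G : SimpleGraph V} {v x y a : V} {A : Set V}

lemma IsCutVertex.exists_not_reachableAvoiding (hv : IsCutVertex G v) (ha : a ≠ v) :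
    ∃ x, x ≠ v ∧ ¬ G.ReachableAvoiding v x a := by
  by_contra! h
  exact hv.2 <| (connected_iff_exists_forall_reachable _).mpr
    ⟨⟨a, ha⟩, fun x => (h x x.2).symm.reachable_induce⟩

lemma TwoEdgeConnected.exists_isCycle_mem_edges (hG : TwoEdgeConnected G) (h : G.Adj x y) :
    ∃ (r : V) (c : G.Walk r r), c.IsCycle ∧ s(x, y) ∈ c.edges :=
  adj_and_reachable_delete_edges_iff_exists_cycle.mp ⟨h, (hG.2.2 _ h).preconnected x y⟩

lemma TwoEdgeConnected.exists_isCycle_subset_cutOff (hG : TwoEdgeConnected G)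
    (hv : IsCutVertex G v) (hav : a ≠ v) (hA : ∀ b ∈ A, b ≠ v → G.ReachableAvoiding v a b) :
    ∃ (r : V) (c : G.Walk r r), c.IsCycle ∧ ∀ z ∈ c.support, z ∈ G.cutOff v A := by
  obtain ⟨x, hxv, hxa⟩ := hv.exists_not_reachableAvoiding hav
  have hx : x ∈ G.cutOff v A := fun b hb hxb => hxa (hxb.trans (hA b hb hxb.right_ne).symm)
  obtain ⟨u, hxu, huv⟩ :=
    (hG.1.preconnected x v).some.exists_reachableAvoiding_adj (Walk.end_mem_support _) hxv
  obtain ⟨r, c, hc, huvc⟩ := hG.exists_isCycle_mem_edges huv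
  refine ⟨r, c, hc, fun z hz => ?_⟩
  obtain rfl | hzv := eq_or_ne z v
  · exact self_mem_cutOff
  · exact mem_cutOff_of_reachableAvoiding (mem_cutOff_of_reachableAvoiding hx hxu)
      (hc.reachableAvoiding (c.fst_mem_support_of_mem_edges huvc) hz hxu.right_ne hzv)

end CutVertex

section Block

variable {V : Type u} {G : SimpleGraph V} {e : Sym2 V} {x : V}

lemma exists_isCycle_of_mem_edgeSpan (hG : TwoEdgeConnected G)
    (hx : x ∈ (edgeSpan G {f | OnCommonCycle G e f}).verts) :
    ∃ (r : V) (c : G.Walk r r), c.IsCycle ∧ e ∈ c.edges ∧ x ∈ c.support := by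
  obtain ⟨y, hxy, rfl | ⟨r, c, hc, hec, hxyc⟩⟩ := hx
  · obtain ⟨r, c, hc, hxyc⟩ := hG.exists_isCycle_mem_edges hxy
    exact ⟨r, c, hc, hxyc, c.fst_mem_support_of_mem_edges hxyc⟩
  · exact ⟨r, c, hc, hec, c.fst_mem_support_of_mem_edges hxyc⟩

lemma IsBlock.exists_reachableAvoiding {B : G.Subgraph} (hG : TwoEdgeConnected G)
    (hB : IsBlock G B) (v : V) :
    ∃ a, a ≠ v ∧ ∀ b ∈ B.verts, b ≠ v → G.ReachableAvoiding v a b := by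
  obtain ⟨e, he, rfl⟩ := hB
  obtain ⟨a, hae, hav⟩ : ∃ a ∈ e, a ≠ v := by
    induction e using Sym2.ind with
    | _ p q =>
      obtain rfl | hpv := eq_or_ne p v
      · exact ⟨q, Sym2.mem_mk_right _ _, (G.ne_of_adj he).symm⟩
      · exact ⟨p, Sym2.mem_mk_left _ _, hpv⟩
  refine ⟨a, hav, fun b hb hbv => ?_⟩
  obtain ⟨r, c, hc, hec, hbc⟩ := exists_isCycle_of_mem_edgeSpan hG hb
  exact hc.reachableAvoiding (c.mem_support_of_mem_edges hec hae) hbc hav hbv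

end Block

namespace PathDecomp

variable {V : Type u} {G : SimpleGraph V} (D : PathDecomp G)

lemma exists_card_bag_le_of_pathWidth_le [Fintype V] {k : ℕ} (h : pathWidth G ≤ k) :
    ∃ D : PathDecomp G, ∀ i, (D.bag i).card ≤ k + 1 := by
  let single : PathDecomp G :=
    ⟨1, fun _ => Finset.univ, fun v => ⟨0, Finset.mem_univ v⟩,
      fun u w _ => ⟨0, Finset.mem_univ u, Finset.mem_univ w⟩,
      fun _ _ _ _ _ v _ _ => Finset.mem_univ v⟩
  obtain ⟨D, hD⟩ := Nat.sInf_mem (s := {w | ∃ D : PathDecomp G, D.width = w}) ⟨_, single, rfl⟩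
  refine ⟨D, fun i => ?_⟩
  have hi := Finset.le_sup (f := fun i => (D.bag i).card) (Finset.mem_univ i)
  rw [pathWidth, ← hD, width] at h
  omega

noncomputable def first (x : V) : Fin D.n :=
  wellFounded_lt.min {i | x ∈ D.bag i} (D.mem_bag x)

lemma mem_bag_first (x : V) : x ∈ D.bag (D.first x) :=
  wellFounded_lt.min_mem {i | x ∈ D.bag i} (D.mem_bag x)

lemma first_le {x : V} {i : Fin D.n} (h : x ∈ D.bag i) : D.first x ≤ i :=
  not_lt.mp (wellFounded_lt.not_lt_min {i | x ∈ D.bag i} h)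

lemma exists_bag_subset [DecidableEq V] [DecidableRel G.Adj] {k : ℕ}
    (hD : ∀ i, (D.bag i).card ≤ k + 1) {S : Finset V} (hS : S.Nonempty)
    (hdeg : ∀ x ∈ S, k ≤ (S.filter (G.Adj x)).card) :
    ∃ t, (D.bag t).Nonempty ∧ D.bag t ⊆ S := by
  obtain ⟨x, hxS, hlast⟩ := S.exists_max_image D.first hS
  have hsub : insert x (S.filter (G.Adj x)) ⊆ D.bag (D.first x) := by
    refine Finset.insert_subset (D.mem_bag_first x) fun y hy => ?_
    obtain ⟨hyS, hxy⟩ := Finset.mem_filter.mp hy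
    obtain ⟨j, hxj, hyj⟩ := D.edge_bag hxy
    exact D.interp _ _ _ (hlast y hyS) (D.first_le hxj) y (D.mem_bag_first y) hyj
  have hcard : (D.bag (D.first x)).card ≤ (insert x (S.filter (G.Adj x))).card := by
    rw [Finset.card_insert_of_notMem (by simp)]
    linarith [hD (D.first x), hdeg x hxS]
  refine ⟨D.first x, ⟨x, D.mem_bag_first x⟩, ?_⟩
  rw [← Finset.eq_of_subset_of_card_le hsub hcard]
  exact Finset.insert_subset hxS (Finset.filter_subset _ _)

lemma exists_bag_subset_support_of_isCycle (hD : ∀ i, (D.bag i).card ≤ 3) {r : V}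
    {c : G.Walk r r} (hc : c.IsCycle) : ∃ t, (D.bag t).Nonempty ∧ ∀ x ∈ D.bag t, x ∈ c.support := by
  classical
  obtain ⟨t, ht, hsub⟩ := D.exists_bag_subset hD ⟨r, by simp⟩
    fun x hx => hc.two_le_card_filter_adj (List.mem_toFinset.mp hx)
  exact ⟨t, ht, fun x hx => List.mem_toFinset.mp (hsub hx)⟩

lemma exists_mem_support_mem_bag {t₂ : Fin D.n} {x y : V} (W : G.Walk x y) {t₁ t₃ : Fin D.n}
    (h₁ : t₁ < t₂) (h₃ : t₂ < t₃) (hx : x ∈ D.bag t₁) (hy : y ∈ D.bag t₃) :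
    ∃ z ∈ W.support, z ∈ D.bag t₂ := by
  induction W generalizing t₁ with
  | nil => exact ⟨_, Walk.start_mem_support _, D.interp _ _ _ h₁.le h₃.le _ hx hy⟩
  | @cons a b c hab W ih =>
    obtain ⟨j, haj, hbj⟩ := D.edge_bag hab
    rcases lt_or_ge j t₂ with hj | hj
    · obtain ⟨z, hz, hzt⟩ := ih hj hbj hy
      exact ⟨z, by simp [hz], hzt⟩
    · exact ⟨a, Walk.start_mem_support _, D.interp _ _ _ h₁.le hj a hx haj⟩

lemma bag_subset_or_bag_subset {X : Set V} (hX : (G.induce Xᶜ).Preconnected)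
    {t₁ t₂ t₃ : Fin D.n} (h₁ : t₁ < t₂) (h₃ : t₂ < t₃) (h₂ : ↑(D.bag t₂) ⊆ X) :
    ↑(D.bag t₁) ⊆ X ∨ ↑(D.bag t₃) ⊆ X := by
  by_contra! h
  obtain ⟨⟨x, hx, hxX⟩, ⟨y, hy, hyX⟩⟩ := And.intro (Set.not_subset.mp h.1) (Set.not_subset.mp h.2)
  obtain ⟨W⟩ := hX ⟨x, hxX⟩ ⟨y, hyX⟩
  obtain ⟨z, hz, hzt⟩ :=
    D.exists_mem_support_mem_bag (W.map (Embedding.induce Xᶜ).toHom) h₁ h₃ hx hy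
  simp only [Walk.support_map, List.mem_map] at hz
  obtain ⟨⟨z, hzX⟩, -, rfl⟩ := hz
  exact hzX (h₂ hzt)

end PathDecomp

lemma Set.ncard_le_two_of_injOn {α β : Type*} [LinearOrder β] {s : Set α} {f : α → β}
    (hf : s.InjOn f) (h : ∀ x ∈ s, ∀ y ∈ s, ∀ z ∈ s, f x < f y → f y < f z → False) :
    s.ncard ≤ 2 := by
  by_contra! hs
  obtain ⟨x, hx, y, hy, z, hz, hxy, hxz, hyz⟩ :=
    (Set.two_lt_ncard (Set.finite_of_ncard_pos (by omega))).mp hs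
  wlog hlt : f x < f y generalizing x y
  · exact this y hy x hx hxy.symm hyz hxz ((hf.ne hy hx hxy.symm).lt_of_le (not_lt.mp hlt))
  rcases lt_trichotomy (f z) (f x) with hzx | hzx | hxz'
  · exact h z hz x hx y hy hzx hlt
  · exact hxz (hf hx hz hzx.symm)
  rcases lt_trichotomy (f z) (f y) with hzy | hzy | hyz'
  · exact h x hx z hz y hy hxz' hzy
  · exact hyz (hf hy hz hzy.symm)
  · exact h x hx y hy z hz hlt hyz'

/-- If `G` is a 2-edge-connected finite simple graph with path-width at most 2,
then every block of `G` contains at most two cut vertices of `G`. -/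
theorem block_at_most_two_cutVertices {V : Type u} [Fintype V] (G : SimpleGraph V)
    (h2ec : TwoEdgeConnected G) (hpw : pathWidth G ≤ 2) (B : G.Subgraph)
    (hB : IsBlock G B) :
    {v | v ∈ B.verts ∧ IsCutVertex G v}.ncard ≤ 2 := by
  classical
  set S := {v | v ∈ B.verts ∧ IsCutVertex G v}
  obtain ⟨D, hD⟩ := PathDecomp.exists_card_bag_le_of_pathWidth_le hpw
  have hbag : ∀ v ∈ S, ∃ t, (D.bag t).Nonempty ∧ ↑(D.bag t) ⊆ G.cutOff v B.verts := by
    rintro v ⟨-, hv⟩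
    obtain ⟨a, hav, hA⟩ := hB.exists_reachableAvoiding h2ec v
    obtain ⟨r, c, hc, hcut⟩ := h2ec.exists_isCycle_subset_cutOff hv hav hA
    obtain ⟨t, ht, hsub⟩ := D.exists_bag_subset_support_of_isCycle hD hc
    exact ⟨t, ht, fun x hx => hcut x (hsub x hx)⟩
  have : Nonempty (Fin D.n) := h2ec.1.nonempty.map D.first
  choose! t ht using hbag
  have hsame : ∀ x ∈ S, ∀ y ∈ S, ↑(D.bag (t x)) ⊆ G.cutOff y B.verts → x = y := by
    intro x hx y hy hsub
    by_contra hne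
    obtain ⟨z, hz⟩ := (ht x hx).1
    exact Set.disjoint_left.mp (disjoint_cutOff h2ec.1 hx.1 hy.1 hne) ((ht x hx).2 hz) (hsub hz)
  refine Set.ncard_le_two_of_injOn (f := t)
    (fun x hx y hy hxy => hsame x hx y hy (by rw [hxy]; exact (ht y hy).2)) ?_
  intro x hx y hy z hz hxy hyz
  obtain ⟨a, -, hA⟩ := hB.exists_reachableAvoiding h2ec y
  rcases D.bag_subset_or_bag_subset (preconnected_induce_compl_cutOff hA) hxy hyz (ht y hy).2
    with h | h
  · exact hxy.ne (congrArg t (hsame x hx y hy h))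
  · exact hyz.ne (congrArg t (hsame z hz y hy h)).symm
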